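/- Let (L, τ) be a locally solid Riesz space and E ⊆ L. If every countable subset of E is order bounded, then E is τ-bounded. -/

import Mathlib

/-!
An order interval `[u, v]` lies in `{x | |x| ≤ w}` with `w = |u| ⊔ |v|`, and a solid neighbourhood
absorbing `w` absorbs that set because `|a⁻¹ • x| ≤ |a⁻¹ • w|`; so order bounded sets are bounded.
Boundedness is detected by countable subsets: if `V` does not absorb `E`, points
`xₙ ∈ E \ cₙ • V` with `‖cₙ‖ ≥ n` form a countable subset of `E` that `V` does not absorb.
-/

open Topology Pointwise

/-- A subset of a lattice-ordered group is solid if `|x| ≤ |y|` and `y ∈ S` imply `x ∈ S`. -/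
def IsSolidSet {L : Type*} [Lattice L] [AddCommGroup L] (S : Set L) : Prop :=
  ∀ x y : L, |x| ≤ |y| → y ∈ S → x ∈ S

theorem abs_smul_le_abs_smul_abs {R M : Type*} [Ring R] [LinearOrder R] [IsOrderedRing R]
    [AddCommGroup M] [Lattice M] [Module R M] [PosSMulMono R M] (a : R) (x : M) :
    |a • x| ≤ |a| • |x| := by
  have key : ∀ b : R, b • x ≤ |b| • |x| := fun b ↦ by
    rcases le_total 0 b with hb | hb
    · rw [abs_of_nonneg hb]
      exact smul_le_smul_of_nonneg_left (le_abs_self x) hb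
    · rw [abs_of_nonpos hb, ← neg_smul_neg]
      exact smul_le_smul_of_nonneg_left (neg_le_abs x) (neg_nonneg.2 hb)
  refine abs_le'.2 ⟨key a, ?_⟩
  simpa using key (-a)

theorem lattice_abs_smul {K M : Type*} [Field K] [LinearOrder K] [IsStrictOrderedRing K]
    [AddCommGroup M] [Lattice M] [Module K M] [PosSMulMono K M] (a : K) (x : M) :
    |a • x| = |a| • |x| := by
  refine le_antisymm (abs_smul_le_abs_smul_abs a x) ?_
  rcases eq_or_ne a 0 with rfl | ha
  · simp [abs]
  calc |a| • |x| = |a| • |a⁻¹ • a • x| := by rw [inv_smul_smul₀ ha]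
    _ ≤ |a| • (|a⁻¹| • |a • x|) :=
        smul_le_smul_of_nonneg_left (abs_smul_le_abs_smul_abs _ _) (abs_nonneg a)
    _ = |a • x| := by rw [smul_smul, ← abs_mul, mul_inv_cancel₀ ha, abs_one, one_smul]

theorem abs_le_sup_abs_abs_of_mem_Icc {M : Type*} [AddCommGroup M] [Lattice M] [AddLeftMono M]
    {u v x : M} (hx : x ∈ Set.Icc u v) : |x| ≤ |u| ⊔ |v| :=
  sup_le ((hx.2.trans (le_abs_self v)).trans le_sup_right)
    ((neg_le_neg_iff.2 hx.1 |>.trans (neg_le_abs u)).trans le_sup_left)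

theorem IsSolidSet.absorbs_abs_le {L : Type*} [AddCommGroup L] [Lattice L]
    [Module ℝ L] [PosSMulMono ℝ L] {S : Set L} (hS : IsSolidSet S) {w : L}
    (hw : Absorbs ℝ S {w}) : Absorbs ℝ S {x | |x| ≤ |w|} := by
  filter_upwards [hw, Bornology.eventually_ne_cobounded (0 : ℝ)] with a hwa ha x hx
  rw [Set.singleton_subset_iff, Set.mem_smul_set_iff_inv_smul_mem₀ ha] at hwa
  rw [Set.mem_smul_set_iff_inv_smul_mem₀ ha]
  refine hS _ _ ?_ hwa
  rw [lattice_abs_smul, lattice_abs_smul]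
  exact smul_le_smul_of_nonneg_left hx (abs_nonneg _)

def IsLocallySolid (L : Type*) [AddCommGroup L] [Lattice L] [TopologicalSpace L] : Prop :=
  ∀ U ∈ 𝓝 (0 : L), ∃ S ∈ 𝓝 (0 : L), S ⊆ U ∧ IsSolidSet S

theorem IsLocallySolid.isVonNBounded_Icc {L : Type*} [AddCommGroup L] [Lattice L]
    [AddLeftMono L] [Module ℝ L] [PosSMulMono ℝ L] [TopologicalSpace L] [ContinuousSMul ℝ L]
    (hL : IsLocallySolid L) (u v : L) : Bornology.IsVonNBounded ℝ (Set.Icc u v) := by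
  intro V hV
  obtain ⟨S, hS, hSV, hsol⟩ := hL V hV
  refine (hsol.absorbs_abs_le (Bornology.isVonNBounded_singleton (|u| ⊔ |v|) hS)).mono hSV ?_
  intro x hx
  simpa only [Set.mem_ofPred_eq, abs_of_nonneg (le_sup_of_le_left (abs_nonneg u))] using
    abs_le_sup_abs_abs_of_mem_Icc hx

theorem Bornology.isVonNBounded_of_countable_subsets {𝕜 E : Type*} [SeminormedRing 𝕜]
    [AddCommGroup E] [Module 𝕜 E] [TopologicalSpace E] {s : Set E}
    (hs : ∀ t ⊆ s, t.Countable → Bornology.IsVonNBounded 𝕜 t) :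
    Bornology.IsVonNBounded 𝕜 s := by
  intro V hV
  by_contra hnot
  simp only [absorbs_iff_norm, Set.not_subset, not_exists, not_forall, exists_prop] at hnot
  choose c hc x hxs hxV using fun n : ℕ ↦ hnot n
  obtain ⟨r, hr⟩ := absorbs_iff_norm.1 <|
    hs (Set.range x) (Set.range_subset_iff.2 hxs) (Set.countable_range x) hV
  obtain ⟨n, hn⟩ := exists_nat_ge r
  exact hxV n (hr (c n) (hn.trans (hc n)) ⟨n, rfl⟩)

theorem stmt_13_general {L : Type*} [AddCommGroup L] [Lattice L] [Module ℝ L]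
    [CovariantClass L L (· + ·) (· ≤ ·)] [PosSMulMono ℝ L]
    [TopologicalSpace L] [ContinuousSMul ℝ L]
    (hsolid : ∀ U ∈ 𝓝 (0 : L), ∃ S ∈ 𝓝 (0 : L), S ⊆ U ∧ IsSolidSet S)
    (E : Set L) (hE : ∀ C ⊆ E, C.Countable → ∃ u v : L, C ⊆ Set.Icc u v) :
    Bornology.IsVonNBounded ℝ E := by
  refine Bornology.isVonNBounded_of_countable_subsets fun C hCE hC ↦ ?_
  obtain ⟨u, v, hCuv⟩ := hE C hCE hC
  exact (IsLocallySolid.isVonNBounded_Icc hsolid u v).subset hCuv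

/-- In a locally solid Riesz space, if every countable subset of `E` is order bounded,
then `E` is topologically bounded. -/
theorem stmt_13 {L : Type*} [AddCommGroup L] [Lattice L] [Module ℝ L]
    [CovariantClass L L (· + ·) (· ≤ ·)] [PosSMulMono ℝ L]
    [TopologicalSpace L] [IsTopologicalAddGroup L] [ContinuousSMul ℝ L]
    (hsolid : ∀ U ∈ 𝓝 (0 : L), ∃ S ∈ 𝓝 (0 : L), S ⊆ U ∧ IsSolidSet S)
    (E : Set L) (hE : ∀ C ⊆ E, C.Countable → ∃ u v : L, C ⊆ Set.Icc u v) :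
    Bornology.IsVonNBounded ℝ E :=
  stmt_13_general hsolid E hE
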